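/- Let μ_v > 0, α, β ≥ 0, and let v : [0,T] → ℝ be differentiable with v(0) ∈ [0, L] where L = max{v(0), 1}, and satisfy v' = -α a(t) v - β b(t) v + μ_v v(1-v) with a, b : [0,T] → [0,∞) continuous. Then 0 ≤ v(t) ≤ L for all t ∈ [0,T], and if v(0) > 0 then v(t) > 0 for all t. -/
import Mathlib

open Set

/-- Comparison principle for v' = -αav - βbv + μ_v v(1-v): with v(0) ≥ 0 one has
    0 ≤ v(t) ≤ L = max{v(0),1} on [0,T], and positivity is preserved. -/
theorem ecm_comparison (T α β μv : ℝ) (hT : 0 < T) (hμv : 0 < μv)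
    (hα : 0 ≤ α) (hβ : 0 ≤ β)
    (v a b : ℝ → ℝ)
    (ha : ContinuousOn a (Set.Icc 0 T)) (hb : ContinuousOn b (Set.Icc 0 T))
    (hann : ∀ t ∈ Set.Icc (0:ℝ) T, 0 ≤ a t)
    (hbnn : ∀ t ∈ Set.Icc (0:ℝ) T, 0 ≤ b t)
    (hderiv : ∀ t ∈ Set.Icc (0:ℝ) T,
      HasDerivAt v (-α * a t * v t - β * b t * v t + μv * v t * (1 - v t)) t)
    (hv0 : 0 ≤ v 0) :
    (∀ t ∈ Set.Icc (0:ℝ) T, 0 ≤ v t ∧ v t ≤ max (v 0) 1) ∧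
    (0 < v 0 → ∀ t ∈ Set.Icc (0:ℝ) T, 0 < v t) := by
  set L : ℝ := max (v 0) 1 with hL
  have hL1 : (1:ℝ) ≤ L := le_max_right _ _
  set g : ℝ → ℝ := fun t => -α * a t - β * b t + μv * (1 - v t) with hg
  have hvc : ContinuousOn v (Icc 0 T) := fun t ht =>
    ((hderiv t ht).continuousAt).continuousWithinAt
  have hgc : ContinuousOn g (Icc 0 T) := by
    apply ContinuousOn.add
    · exact (continuousOn_const.mul ha).sub (continuousOn_const.mul hb)
    · exact continuousOn_const.mul (continuousOn_const.sub hvc)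
  obtain ⟨M, hM⟩ := isCompact_Icc.exists_bound_of_continuousOn hgc
  -- forward zero propagation
  have hfwd : ∀ t0 ∈ Icc (0:ℝ) T, v t0 = 0 → ∀ t ∈ Icc t0 T, v t = 0 := by
    intro t0 ht0 hvt0 t ht
    have key := norm_le_gronwallBound_of_norm_deriv_right_le
      (f := v) (f' := fun s => g s * v s) (δ := 0) (K := M) (ε := 0)
      (a := t0) (b := T)
      (hvc.mono (Icc_subset_Icc ht0.1 le_rfl))
      (fun s hs => by
        have hsT : s ∈ Icc (0:ℝ) T := ⟨le_trans ht0.1 hs.1, le_of_lt hs.2⟩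
        have := (hderiv s hsT).hasDerivWithinAt (s := Ici s)
        convert this using 1
        simp only [hg]; ring)
      (by simp [hvt0])
      (fun s hs => by
        have hsT : s ∈ Icc (0:ℝ) T := ⟨le_trans ht0.1 hs.1, le_of_lt hs.2⟩
        have := hM s hsT
        calc ‖g s * v s‖ = ‖g s‖ * ‖v s‖ := norm_mul _ _
          _ ≤ M * ‖v s‖ + 0 := by
              nlinarith [norm_nonneg (v s), norm_nonneg (g s)]) t ht
    rw [gronwallBound_ε0, zero_mul] at key
    exact norm_eq_zero.mp (le_antisymm key (norm_nonneg _))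
  -- backward zero propagation
  have hbwd : ∀ t1 ∈ Icc (0:ℝ) T, v t1 = 0 → v 0 = 0 := by
    intro t1 ht1 hvt1
    set w : ℝ → ℝ := fun s => v (t1 - s) with hw
    have hwc : ContinuousOn w (Icc 0 t1) := by
      apply hvc.comp (Continuous.continuousOn (by continuity))
      intro s hs
      exact ⟨by linarith [hs.2], by linarith [hs.1, ht1.2]⟩
    have key := norm_le_gronwallBound_of_norm_deriv_right_le
      (f := w) (f' := fun s =>
        (-α * a (t1 - s) * v (t1 - s) - β * b (t1 - s) * v (t1 - s)
          + μv * v (t1 - s) * (1 - v (t1 - s))) * (-1))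
      (δ := 0) (K := M) (ε := 0) (a := 0) (b := t1) hwc
      (fun s hs => by
        have hsT : t1 - s ∈ Icc (0:ℝ) T :=
          ⟨by linarith [hs.2.le], by linarith [hs.1, ht1.2]⟩
        have h2 : HasDerivAt (fun x : ℝ => t1 - x) (-1) s := by
          simpa using (hasDerivAt_id s).const_sub t1
        exact ((hderiv (t1 - s) hsT).comp s h2).hasDerivWithinAt
        )
      (by simp [hw, hvt1])
      (fun s hs => by
        have hsT : t1 - s ∈ Icc (0:ℝ) T :=
          ⟨by linarith [hs.2.le], by linarith [hs.1, ht1.2]⟩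
        have hgb := hM (t1 - s) hsT
        have heq : (-α * a (t1 - s) * v (t1 - s) - β * b (t1 - s) * v (t1 - s)
          + μv * v (t1 - s) * (1 - v (t1 - s))) * (-1) = -(g (t1 - s) * w s) := by
          simp only [hg, hw]; ring
        beta_reduce
        rw [heq, norm_neg, norm_mul]
        nlinarith [norm_nonneg (w s), norm_nonneg (g (t1 - s))]) t1 ⟨ht1.1, le_rfl⟩
    rw [gronwallBound_ε0, zero_mul] at key
    have : w t1 = 0 := norm_eq_zero.mp (le_antisymm key (norm_nonneg _))
    simpa [hw] using this
  -- nonnegativity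
  have hnn : ∀ t ∈ Icc (0:ℝ) T, 0 ≤ v t := by
    intro t ht
    by_contra hneg
    push_neg at hneg
    have hivt : (0:ℝ) ∈ Icc (v t) (v 0) := ⟨hneg.le, hv0⟩
    obtain ⟨t0, ht0mem, hvt0⟩ := intermediate_value_Icc' ht.1
      (hvc.mono (Icc_subset_Icc le_rfl ht.2)) hivt
    have : v t = 0 := hfwd t0 ⟨ht0mem.1, le_trans ht0mem.2 ht.2⟩ hvt0 t
      ⟨ht0mem.2, ht.2⟩
    linarith
  -- upper bound
  have hub : ∀ t ∈ Icc (0:ℝ) T, v t ≤ L := by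
    intro t1 ht1
    by_contra hgt
    push_neg at hgt
    set S : Set ℝ := Icc 0 t1 ∩ v ⁻¹' Iic L with hS
    have hScl : IsClosed S := by
      have : ContinuousOn v (Icc 0 t1) := hvc.mono (Icc_subset_Icc le_rfl ht1.2)
      exact this.preimage_isClosed_of_isClosed isClosed_Icc isClosed_Iic
    have hScomp : IsCompact S :=
      isCompact_Icc.of_isClosed_subset hScl inter_subset_left
    have hSne : S.Nonempty := ⟨0, ⟨le_rfl, ht1.1⟩, by show v 0 ≤ L; exact le_max_left _ _⟩
    set t0 : ℝ := sSup S with ht0def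
    have ht0S : t0 ∈ S := hScomp.sSup_mem hSne
    have ht0le : t0 ≤ t1 := ht0S.1.2
    have ht0ge : 0 ≤ t0 := ht0S.1.1
    have ht0lt : t0 < t1 := lt_of_le_of_ne ht0le (by
      intro h; rw [h] at ht0S; exact absurd ht0S.2 (not_le.mpr hgt))
    have hbig : ∀ s ∈ Ioc t0 t1, L < v s := by
      intro s hs
      by_contra hle
      push_neg at hle
      have : s ∈ S := ⟨⟨le_trans ht0ge hs.1.le, hs.2⟩, hle⟩
      exact absurd (le_csSup hScomp.bddAbove this) (not_le.mpr hs.1)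
    -- v is antitone on [t0, t1]
    have hanti : AntitoneOn v (Icc t0 t1) := by
      apply antitoneOn_of_deriv_nonpos (convex_Icc t0 t1)
      · exact hvc.mono (Icc_subset_Icc ht0ge (le_trans le_rfl ht1.2))
      · intro s hs
        rw [interior_Icc] at hs
        have hsT : s ∈ Icc (0:ℝ) T :=
          ⟨le_trans ht0ge hs.1.le, le_trans hs.2.le ht1.2⟩
        exact (hderiv s hsT).differentiableAt.differentiableWithinAt
      · intro s hs
        rw [interior_Icc] at hs
        have hsT : s ∈ Icc (0:ℝ) T :=
          ⟨le_trans ht0ge hs.1.le, le_trans hs.2.le ht1.2⟩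
        rw [(hderiv s hsT).deriv]
        have hvs : 1 ≤ v s := le_trans hL1 (hbig s ⟨hs.1, hs.2.le⟩).le
        have hvs0 : 0 ≤ v s := by linarith
        have h1 : -α * a s * v s ≤ 0 := by
          have h := hann s hsT; nlinarith [mul_nonneg (mul_nonneg hα h) hvs0]
        have h2 : -β * b s * v s ≤ 0 := by
          have h := hbnn s hsT; nlinarith [mul_nonneg (mul_nonneg hβ h) hvs0]
        have h3 : μv * v s * (1 - v s) ≤ 0 := by nlinarith [mul_nonneg hμv.le hvs0]
        linarith
    have := hanti (left_mem_Icc.mpr ht0le) (right_mem_Icc.mpr ht0le) ht0le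
    have hvt0L : v t0 ≤ L := ht0S.2
    linarith
  refine ⟨fun t ht => ⟨hnn t ht, hub t ht⟩, ?_⟩
  intro hpos t ht
  rcases lt_or_eq_of_le (hnn t ht) with h | h
  · exact h
  · exact absurd (hbwd t ht h.symm) (by linarith)
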